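/- For every integer n ≥ 1, ∫₀¹ (Σ_{j=1}^n cos(4π·8^j·θ))⁴ dθ ≤ n². -/

import Mathlib

/-!
Put `a = 2 * 8 ^ j`, so the summands are `cos (2 * π * a * θ)` for `a` in a set `A` of `n` naturals.
Applying `2 cos x cos y = cos (x - y) + cos (x + y)` twice, a product of four such cosines
integrates over `[0, 1]` to `1/8` times the number of sign patterns with `a ± b ± c ± d = 0`. In `A`
no element is the sum of three others (in base 8 such a sum has digit sum 3), so only the patterns
with two signs of each kind survive, and `∫ (∑ cos)^4 = 3/8 * E(A)` with `E` the additive energy.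
Finally `A` is a Sidon set (base-8 representations are unique), hence `E(A) ≤ 2 * n ^ 2` and the
integral is at most `3/4 * n ^ 2`.
-/

open MeasureTheory Finset Real

namespace Nat

variable {b : ℕ}

theorem pow_add_pow_add_pow_ne_pow (hb : 4 ≤ b) (i j k l : ℕ) :
    b ^ i + b ^ j + b ^ k ≠ b ^ l := by
  intro h
  induction l generalizing i j k <;> rcases i with _ | i <;> rcases j with _ | j <;>
    rcases k with _ | k
  case succ.succ.succ.succ l ih =>
    simp only [pow_succ, ← add_mul] at h
    exact ih i j k (Nat.eq_of_mul_eq_mul_right (by omega) h)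
  -- Modulo `b`, a power with exponent `0` leaves `1` and the others leave `0`.
  all_goals
    have := congrArg (· % b) h
    simp only [pow_zero, pow_succ, Nat.add_mod, Nat.mul_mod_left, Nat.zero_mod, add_zero, zero_add,
      Nat.reduceAdd, Nat.mod_eq_of_lt (show 1 < b by omega), Nat.mod_eq_of_lt (show 2 < b by omega),
      Nat.mod_eq_of_lt (show 3 < b by omega), OfNat.ofNat_ne_zero, OfNat.ofNat_ne_one, one_ne_zero,
      zero_ne_one] at this
  all_goals simp_all [add_comm _ 1, add_assoc]

theorem pow_add_pow_eq_pow_add_pow (hb : 3 ≤ b) {i j k l : ℕ}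
    (h : b ^ i + b ^ j = b ^ k + b ^ l) : i = k ∧ j = l ∨ i = l ∧ j = k := by
  induction i generalizing j k l <;> rcases j with _ | j <;> rcases k with _ | k <;>
    rcases l with _ | l
  case succ.succ.succ.succ i ih =>
    simp only [pow_succ, ← add_mul] at h
    have := ih (Nat.eq_of_mul_eq_mul_right (by omega) h)
    omega
  all_goals
    have := congrArg (· % b) h
    simp only [pow_zero, pow_succ, Nat.add_mod, Nat.mul_mod_left, Nat.zero_mod, add_zero, zero_add,
      Nat.reduceAdd, Nat.mod_eq_of_lt (show 1 < b by omega), Nat.mod_eq_of_lt (show 2 < b by omega),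
      OfNat.ofNat_ne_zero, OfNat.ofNat_ne_one, one_ne_zero, zero_ne_one] at this
  all_goals simp_all [add_comm 1, Nat.pow_right_inj (show 1 < b by omega)]

end Nat

namespace Finset

variable {α : Type*} [Add α] [DecidableEq α]

theorem addEnergy_eq_sum_ite (s t : Finset α) :
    s.addEnergy t =
      ∑ a₁ ∈ s, ∑ a₂ ∈ s, ∑ b₁ ∈ t, ∑ b₂ ∈ t, if a₁ + b₁ = a₂ + b₂ then 1 else 0 := by
  rw [addEnergy, card_filter, sum_product, sum_product]
  simp_rw [sum_product]

theorem addEnergy_le_two_mul_card_sq {s : Finset α}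
    (hs : ∀ a ∈ s, ∀ b ∈ s, ∀ c ∈ s, ∀ d ∈ s, a + b = c + d → a = c ∧ b = d ∨ a = d ∧ b = c) :
    s.addEnergy s ≤ 2 * #s ^ 2 := by
  set diagonal := (s ×ˢ s).image fun x => ((x.1, x.1), (x.2, x.2))
  set crossed := (s ×ˢ s).image fun x => ((x.1, x.2), (x.2, x.1))
  have hsub : {x ∈ (s ×ˢ s) ×ˢ s ×ˢ s | x.1.1 + x.2.1 = x.1.2 + x.2.2} ⊆ diagonal ∪ crossed := by
    rintro ⟨⟨a₁, a₂⟩, b₁, b₂⟩ hx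
    simp only [mem_filter, mem_product] at hx
    obtain ⟨⟨⟨ha₁, ha₂⟩, hb₁, hb₂⟩, h⟩ := hx
    have hab : (a₁, b₁) ∈ s ×ˢ s := mem_product.2 ⟨ha₁, hb₁⟩
    rcases hs a₁ ha₁ b₁ hb₁ a₂ ha₂ b₂ hb₂ h with ⟨rfl, rfl⟩ | ⟨rfl, rfl⟩
    · exact mem_union_left _ (mem_image_of_mem _ hab)
    · exact mem_union_right _ (mem_image_of_mem _ hab)
  calc s.addEnergy s ≤ #(diagonal ∪ crossed) := card_le_card hsub
    _ ≤ #(s ×ˢ s) + #(s ×ˢ s) := (card_union_le _ _).trans (add_le_add card_image_le card_image_le)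
    _ = 2 * #s ^ 2 := by rw [card_product]; ring

end Finset

theorem integral_cos_two_pi_int_mul (k : ℤ) :
    ∫ θ in (0:ℝ)..1, cos (2 * π * k * θ) = if k = 0 then 1 else 0 := by
  split_ifs with hk
  · simp [hk]
  have hc : 2 * π * k ≠ 0 := by positivity
  rw [intervalIntegral.integral_comp_mul_left (fun x => cos x) hc, integral_cos, mul_zero,
    sin_zero, sub_zero, mul_one, show 2 * π * (k : ℝ) = (2 * k : ℤ) * π by push_cast; ring,
    sin_int_mul_pi, smul_zero]

theorem cos_mul_cos_two_pi_int (u v : ℤ) (θ : ℝ) :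
    cos (2 * π * u * θ) * cos (2 * π * v * θ) =
      (cos (2 * π * (u - v : ℤ) * θ) + cos (2 * π * (u + v : ℤ) * θ)) / 2 := by
  rw [eq_div_iff two_ne_zero, mul_comm, ← mul_assoc, two_mul_cos_mul_cos]
  push_cast
  ring_nf

theorem integral_cos_mul_cos_two_pi_int (u v : ℤ) :
    ∫ θ in (0:ℝ)..1, cos (2 * π * u * θ) * cos (2 * π * v * θ) =
      ((if u = v then 1 else 0) + (if u = -v then 1 else 0)) / 2 := by
  simp_rw [cos_mul_cos_two_pi_int]
  rw [intervalIntegral.integral_div, intervalIntegral.integral_add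
      (Continuous.intervalIntegrable (by fun_prop) _ _)
      (Continuous.intervalIntegrable (by fun_prop) _ _),
    integral_cos_two_pi_int_mul, integral_cos_two_pi_int_mul]
  simp only [sub_eq_zero, add_eq_zero_iff_eq_neg]

theorem integral_cos_mul_cos_mul_cos_mul_cos {p q r s : ℕ} (hp : q + r + s ≠ p)
    (hq : p + r + s ≠ q) (hr : p + q + s ≠ r) (hs : p + q + r ≠ s) :
    ∫ θ in (0:ℝ)..1, cos (2 * π * p * θ) * cos (2 * π * q * θ) *
        (cos (2 * π * r * θ) * cos (2 * π * s * θ)) =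
      ((if p + q = r + s then 1 else 0) + (if p + r = q + s then 1 else 0) +
        (if p + s = q + r then 1 else 0)) / 8 := by
  let C (u : ℤ) (θ : ℝ) := cos (2 * π * u * θ)
  have hC (u v : ℤ) : IntervalIntegrable (fun θ => C u θ * C v θ) volume 0 1 :=
    Continuous.intervalIntegrable (by fun_prop) _ _
  have expand (θ : ℝ) : cos (2 * π * p * θ) * cos (2 * π * q * θ) *
        (cos (2 * π * r * θ) * cos (2 * π * s * θ)) =
      (C (p - q) θ * C (r - s) θ + C (p - q) θ * C (r + s) θ + C (p + q) θ * C (r - s) θ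
        + C (p + q) θ * C (r + s) θ) / 4 := by
    have hpq := cos_mul_cos_two_pi_int p q θ
    have hrs := cos_mul_cos_two_pi_int r s θ
    simp only [Int.cast_natCast] at hpq hrs
    simp only [C, hpq, hrs]
    ring
  simp_rw [expand]
  rw [intervalIntegral.integral_div,
    intervalIntegral.integral_add (((hC _ _).add (hC _ _)).add (hC _ _)) (hC _ _),
    intervalIntegral.integral_add ((hC _ _).add (hC _ _)) (hC _ _),
    intervalIntegral.integral_add (hC _ _) (hC _ _)]
  simp only [C, integral_cos_mul_cos_two_pi_int]
  have e₁ : (p : ℤ) - q = r - s ↔ p + s = q + r := by omega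
  have e₂ : (p : ℤ) - q = -(r - s) ↔ p + r = q + s := by omega
  have e₃ : (p : ℤ) + q = r + s ↔ p + q = r + s := by omega
  -- the other five sign patterns are ruled out by `hp`, `hq`, `hr`, `hs`
  simp (disch := omega) only [e₁, e₂, e₃, if_neg]
  ring

theorem integral_sum_cos_pow_four_eq_addEnergy {A : Finset ℕ}
    (hA : ∀ a ∈ A, ∀ b ∈ A, ∀ c ∈ A, ∀ d ∈ A, a + b + c ≠ d) :
    ∫ θ in (0:ℝ)..1, (∑ a ∈ A, cos (2 * π * a * θ)) ^ 4 = 3 / 8 * (A.addEnergy A : ℝ) := by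
  have expand (θ : ℝ) : (∑ a ∈ A, cos (2 * π * a * θ)) ^ 4 =
      ∑ p ∈ A, ∑ r ∈ A, ∑ q ∈ A, ∑ s ∈ A, cos (2 * π * p * θ) * cos (2 * π * q * θ) *
        (cos (2 * π * r * θ) * cos (2 * π * s * θ)) := by
    rw [show ∀ x : ℝ, x ^ 4 = x * x * (x * x) by intro x; ring]
    simp only [sum_mul_sum]
  simp_rw [expand]
  simp (disch := exact fun _ _ => Continuous.intervalIntegrable (by fun_prop) _ _) only
    [intervalIntegral.integral_finsetSum]
  rw [sum_congr rfl fun p hp => sum_congr rfl fun r hr => sum_congr rfl fun q hq =>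
    sum_congr rfl fun s hs =>
      integral_cos_mul_cos_mul_cos_mul_cos (hA q hq r hr s hs p hp) (hA p hp r hr s hs q hq)
        (hA p hp q hq s hs r hr) (hA p hp q hq r hr s hs)]
  simp only [← sum_div, sum_add_distrib]
  have hE : (A.addEnergy A : ℝ) =
      ∑ a ∈ A, ∑ b ∈ A, ∑ c ∈ A, ∑ d ∈ A, if a + c = b + d then 1 else 0 := by
    rw [A.addEnergy_eq_sum_ite A]
    push_cast
    rfl
  have hE₂ : (∑ a ∈ A, ∑ b ∈ A, ∑ c ∈ A, ∑ d ∈ A, if a + b = c + d then (1:ℝ) else 0) =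
      A.addEnergy A := by
    rw [hE]
    exact sum_congr rfl fun a _ => sum_comm
  have hE₃ : (∑ a ∈ A, ∑ b ∈ A, ∑ c ∈ A, ∑ d ∈ A, if a + d = c + b then (1:ℝ) else 0) =
      A.addEnergy A := by
    rw [hE]
    refine sum_congr rfl fun a _ => sum_congr rfl fun b _ => ?_
    exact sum_comm.trans (sum_congr rfl fun d _ => sum_congr rfl fun c _ => by rw [add_comm c b])
  rw [← hE, hE₂, hE₃]
  ring

theorem integral_cos_sum_pow_four_le_general (n : ℕ) :
    ∫ θ in (0:ℝ)..1, (∑ j ∈ Finset.Icc 1 n, Real.cos (4 * π * 8 ^ j * θ)) ^ 4 ≤ (n : ℝ) ^ 2 := by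
  have hinj : Function.Injective fun j : ℕ => 2 * 8 ^ j := fun i j h => by simpa using h
  set A := (Icc 1 n).image fun j => 2 * 8 ^ j
  have hcard : #A = n := by rw [card_image_of_injective _ hinj, Nat.card_Icc]; omega
  have hsum (θ : ℝ) :
      ∑ j ∈ Icc 1 n, cos (4 * π * 8 ^ j * θ) = ∑ a ∈ A, cos (2 * π * a * θ) := by
    rw [sum_image fun i _ j _ h => hinj h]
    push_cast
    ring_nf
  have hA : ∀ a ∈ A, ∀ b ∈ A, ∀ c ∈ A, ∀ d ∈ A, a + b + c ≠ d := by
    simp only [A, forall_mem_image]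
    intro i _ j _ k _ l _
    have := Nat.pow_add_pow_add_pow_ne_pow (by norm_num : 4 ≤ 8) i j k l
    omega
  have hSidon : ∀ a ∈ A, ∀ b ∈ A, ∀ c ∈ A, ∀ d ∈ A,
      a + b = c + d → a = c ∧ b = d ∨ a = d ∧ b = c := by
    simp only [A, forall_mem_image]
    intro i _ j _ k _ l _ h
    rcases Nat.pow_add_pow_eq_pow_add_pow (by norm_num) (by omega : 8 ^ i + 8 ^ j = 8 ^ k + 8 ^ l)
      with ⟨rfl, rfl⟩ | ⟨rfl, rfl⟩ <;> simp
  calc _ = ∫ θ in (0:ℝ)..1, (∑ a ∈ A, cos (2 * π * a * θ)) ^ 4 := by simp_rw [hsum]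
    _ = 3 / 8 * (A.addEnergy A : ℝ) := integral_sum_cos_pow_four_eq_addEnergy hA
    _ ≤ 3 / 8 * (2 * n ^ 2) := by
      gcongr
      exact_mod_cast hcard ▸ A.addEnergy_le_two_mul_card_sq hSidon
    _ ≤ n ^ 2 := by linarith [sq_nonneg (n : ℝ)]

theorem integral_cos_sum_pow_four_le (n : ℕ) (hn : 1 ≤ n) :
    ∫ θ in (0:ℝ)..1, (∑ j ∈ Finset.Icc 1 n, Real.cos (4 * π * 8 ^ j * θ)) ^ 4 ≤ (n : ℝ) ^ 2 :=
  integral_cos_sum_pow_four_le_general n
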